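/- arXiv:2506.22177 — 3 statements merged into one kernel-verified Lean document; each statement's English description precedes it below -/
import Mathlib

section
/- Boundedness of recursively dominated sequences: let (b_k) be a sequence of nonnegative reals satisfying b_k ≤ c + K·b_{k-1}^α for all k ≥ 1, where c > 0, K > 1, and α > 1. If K·b₀^{α-1} ≤ 1/2 and K·c^{α-1} < 2^{-α}, then the sequence (b_k) is bounded. -/
/-- Boundedness of recursively dominated sequences. -/
theorem recursive_sequence_bounded (b : ℕ → ℝ) (c K α : ℝ) (hc : 0 < c) (hK : 1 < K)
    (hα : 1 < α) (hb : ∀ k, 0 ≤ b k)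
    (hrec : ∀ k : ℕ, 1 ≤ k → b k ≤ c + K * b (k - 1) ^ α)
    (h1 : K * b 0 ^ (α - 1) ≤ 1 / 2) (h2 : K * c ^ (α - 1) < 2 ^ (-α)) :
    ∃ M : ℝ, ∀ k, b k ≤ M := by
  set M : ℝ := max (b 0) (2 * c) with hM
  have hM0 : 0 ≤ M := le_trans (hb 0) (le_max_left _ _)
  have h2c : 2 * c ≤ M := le_max_right _ _
  have hK0 : 0 < K := lt_trans one_pos hK
  have hα1 : 0 ≤ α - 1 := by linarith
  -- key : K * M ^ (α - 1) ≤ 1 / 2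
  have hkey : K * M ^ (α - 1) ≤ 1 / 2 := by
    rcases max_cases (b 0) (2 * c) with ⟨h, _⟩ | ⟨h, _⟩
    · rw [hM, h]; exact h1
    · rw [hM, h]
      have h2c' : (2 * c : ℝ) ^ (α - 1) = 2 ^ (α - 1) * c ^ (α - 1) :=
        Real.mul_rpow (by norm_num) hc.le
      have hlt : K * c ^ (α - 1) * 2 ^ (α - 1) < 2 ^ (-α) * 2 ^ (α - 1) := by
        apply mul_lt_mul_of_pos_right h2 (Real.rpow_pos_of_pos two_pos _)
      have heq : (2 : ℝ) ^ (-α) * 2 ^ (α - 1) = 1 / 2 := by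
        have he : -α + (α - 1) = -1 := by ring
        rw [← Real.rpow_add two_pos, he, Real.rpow_neg_one]
        norm_num
      rw [h2c']
      nlinarith [Real.rpow_pos_of_pos two_pos (α - 1),
        Real.rpow_nonneg hc.le (α - 1)]
  have main : ∀ k, b k ≤ M := by
    intro k
    induction k with
    | zero => exact le_max_left _ _
    | succ n ih =>
      have hr := hrec (n + 1) (Nat.le_add_left 1 n)
      simp only [Nat.add_sub_cancel] at hr
      have hpow : b n ^ α ≤ M ^ (α - 1) * b n := by
        rcases eq_or_lt_of_le (hb n) with h0 | h0
        · rw [← h0, Real.zero_rpow (by positivity)]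
          positivity
        · have : b n ^ α = b n ^ (α - 1) * b n := by
            rw [← Real.rpow_add_one h0.ne']
            ring_nf
          rw [this]
          exact mul_le_mul_of_nonneg_right
            (Real.rpow_le_rpow (hb n) ih hα1) (hb n)
      have : K * b n ^ α ≤ (1 / 2) * b n := by
        calc K * b n ^ α ≤ K * (M ^ (α - 1) * b n) :=
              mul_le_mul_of_nonneg_left hpow hK0.le
          _ = (K * M ^ (α - 1)) * b n := by ring
          _ ≤ (1 / 2) * b n := mul_le_mul_of_nonneg_right hkey (hb n)
      have hbn : b n ≤ M := ih
      linarith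
  exact ⟨M, main⟩
end

section
/- Radial powers of the Grushin gauge are eigenfunctions of the Grushin operator outside the origin: for q ∈ ℝ and z = (x,y) with x ≠ 0 and (x,y) ≠ 0, the function Ψ(z) = d(z)^q satisfies Δ_γ Ψ(z) = q(q − 2 + N_γ) · d(z)^{q−2−2γ} · |x|^{2γ}, where Δ_γ u = Δ_x u + |x|^{2γ} Δ_y u and d(x,y) = (|x|^{2(γ+1)} + (γ+1)²|y|²)^{1/(2(γ+1))}. -/
/-!
Writing `e = q / (2(γ + 1))` and `F_e(t, s) = (t ^ (γ + 1) + (γ + 1)² s) ^ e`, we have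
`d(x, y) ^ q = F_e(|x|², |y|²)`, so both partial Laplacians are Laplacians of radial functions,
`Δ φ(|x|²) = 4 |x|² φ''(|x|²) + 2 n φ'(|x|²)`. In the resulting sum the two terms involving
`F_{e-2}` combine into a multiple of `F_{e-2} · (t ^ (γ + 1) + (γ + 1)² s) = F_{e-1}`, and then
everything is a multiple of `t ^ γ F_{e-1} = |x|^{2γ} d^{q-2-2γ}`.
-/

noncomputable def lapE {n : ℕ} (f : EuclideanSpace ℝ (Fin n) → ℝ)
    (x : EuclideanSpace ℝ (Fin n)) : ℝ :=
  ∑ i : Fin n, fderiv ℝ (fun y => fderiv ℝ f y (EuclideanSpace.single i (1 : ℝ))) x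
    (EuclideanSpace.single i (1 : ℝ))

open Filter Topology

section RadialLaplacian

variable {n : ℕ} {φ φ' : ℝ → ℝ} {b : ℝ} {x : EuclideanSpace ℝ (Fin n)}

lemma fderiv_comp_norm_sq_single_eventuallyEq
    (hφ : ∀ᶠ t in 𝓝 (‖x‖ ^ 2), HasDerivAt φ (φ' t) t) (i : Fin n) :
    (fun x' => fderiv ℝ (fun z => φ (‖z‖ ^ 2)) x' (EuclideanSpace.single i 1))
      =ᶠ[𝓝 x] fun x' => φ' (‖x'‖ ^ 2) * (2 * x' i) := by
  have hcont : ContinuousAt (fun z : EuclideanSpace ℝ (Fin n) => ‖z‖ ^ 2) x := by fun_prop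
  filter_upwards [hcont.eventually hφ] with x' hx'
  have hderiv : HasFDerivAt (fun z : EuclideanSpace ℝ (Fin n) => φ (‖z‖ ^ 2))
      (φ' (‖x'‖ ^ 2) • 2 • innerSL ℝ x') x' :=
    hx'.comp_hasFDerivAt x' (hasStrictFDerivAt_norm_sq x').hasFDerivAt
  rw [hderiv.fderiv]
  simp [EuclideanSpace.inner_single_right, mul_comm]

lemma fderiv_comp_norm_sq_mul_coord_single (hφ' : HasDerivAt φ' b (‖x‖ ^ 2)) (i : Fin n) :
    fderiv ℝ (fun x' : EuclideanSpace ℝ (Fin n) => φ' (‖x'‖ ^ 2) * (2 * x' i)) x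
      (EuclideanSpace.single i 1) = 4 * b * x i ^ 2 + 2 * φ' (‖x‖ ^ 2) := by
  have hcoord : HasFDerivAt (fun x' : EuclideanSpace ℝ (Fin n) => 2 * x' i)
      ((2 : ℝ) • innerSL ℝ (EuclideanSpace.single i (1 : ℝ))) x := by
    simpa [EuclideanSpace.inner_single_left] using
      ((innerSL ℝ (EuclideanSpace.single i (1 : ℝ))).hasFDerivAt (x := x)).const_mul (2 : ℝ)
  have hderiv : HasFDerivAt (fun x' : EuclideanSpace ℝ (Fin n) => φ' (‖x'‖ ^ 2) * (2 * x' i))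
      (φ' (‖x‖ ^ 2) • (2 : ℝ) • innerSL ℝ (EuclideanSpace.single i (1 : ℝ))
        + (2 * x i) • b • 2 • innerSL ℝ x) x :=
    (hφ'.comp_hasFDerivAt x (hasStrictFDerivAt_norm_sq x).hasFDerivAt).mul hcoord
  rw [hderiv.fderiv]
  simp [EuclideanSpace.inner_single_right]
  ring

lemma lapE_comp_norm_sq (hφ : ∀ᶠ t in 𝓝 (‖x‖ ^ 2), HasDerivAt φ (φ' t) t)
    (hφ' : HasDerivAt φ' b (‖x‖ ^ 2)) :
    lapE (fun x' => φ (‖x'‖ ^ 2)) x = 4 * b * ‖x‖ ^ 2 + 2 * n * φ' (‖x‖ ^ 2) := by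
  have hsecond (i : Fin n) :
      fderiv ℝ (fun x' => fderiv ℝ (fun z => φ (‖z‖ ^ 2)) x' (EuclideanSpace.single i 1)) x
        (EuclideanSpace.single i 1) = 4 * b * x i ^ 2 + 2 * φ' (‖x‖ ^ 2) := by
    rw [(fderiv_comp_norm_sq_single_eventuallyEq hφ i).fderiv_eq, fderiv_comp_norm_sq_mul_coord_single hφ' i]
  simp only [lapE, hsecond, Finset.sum_add_distrib, ← Finset.mul_sum,
    ← EuclideanSpace.real_norm_sq_eq, Finset.sum_const, Finset.card_univ, Fintype.card_fin,
    nsmul_eq_mul]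
  ring

end RadialLaplacian

noncomputable def grushinProfile (γ e t s : ℝ) : ℝ := (t ^ (γ + 1) + (γ + 1) ^ 2 * s) ^ e

lemma rpow_grushin_gauge_eq_grushinProfile {γ : ℝ} (hγ : γ + 1 ≠ 0) (q : ℝ) {a : ℝ} (ha : 0 ≤ a)
    (b : ℝ) :
    ((a ^ (2 * (γ + 1)) + (γ + 1) ^ 2 * b ^ 2) ^ (1 / (2 * (γ + 1)))) ^ q
      = grushinProfile γ (q / (2 * (γ + 1))) (a ^ 2) (b ^ 2) := by
  have hbase : 0 ≤ a ^ (2 * (γ + 1)) + (γ + 1) ^ 2 * b ^ 2 := by positivity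
  rw [grushinProfile, ← Real.rpow_mul hbase, Real.rpow_mul ha, Real.rpow_two]
  congr 1
  field_simp

lemma grushinProfile_add_one {γ e t s : ℝ} (hρ : 0 < t ^ (γ + 1) + (γ + 1) ^ 2 * s) :
    grushinProfile γ (e + 1) t s = grushinProfile γ e t s * (t ^ (γ + 1) + (γ + 1) ^ 2 * s) :=
  Real.rpow_add_one hρ.ne' e

section Derivatives

variable {γ e t s : ℝ}

lemma hasDerivAt_grushinProfile_fst (ht : t ≠ 0) (hρ : t ^ (γ + 1) + (γ + 1) ^ 2 * s ≠ 0) :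
    HasDerivAt (fun t => grushinProfile γ e t s)
      (e * (γ + 1) * (t ^ γ * grushinProfile γ (e - 1) t s)) t := by
  have hbase : HasDerivAt (fun t => t ^ (γ + 1) + (γ + 1) ^ 2 * s) ((γ + 1) * t ^ γ) t := by
    simpa using (Real.hasDerivAt_rpow_const (p := γ + 1) (Or.inl ht)).add_const ((γ + 1) ^ 2 * s)
  refine (hbase.rpow_const (p := e) (Or.inl hρ)).congr_deriv ?_
  rw [grushinProfile]
  ring

lemma hasDerivAt_deriv_grushinProfile_fst (ht : t ≠ 0)
    (hρ : t ^ (γ + 1) + (γ + 1) ^ 2 * s ≠ 0) :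
    HasDerivAt (fun t => e * (γ + 1) * (t ^ γ * grushinProfile γ (e - 1) t s))
      (e * (γ + 1) * (γ * t ^ (γ - 1) * grushinProfile γ (e - 1) t s
        + t ^ γ * ((e - 1) * (γ + 1) * (t ^ γ * grushinProfile γ (e - 2) t s)))) t := by
  have hprofile := hasDerivAt_grushinProfile_fst (e := e - 1) ht hρ
  rw [show e - 1 - 1 = e - 2 by ring] at hprofile
  exact ((Real.hasDerivAt_rpow_const (p := γ) (Or.inl ht)).mul hprofile).const_mul _

lemma hasDerivAt_grushinProfile_snd (hρ : t ^ (γ + 1) + (γ + 1) ^ 2 * s ≠ 0) :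
    HasDerivAt (fun s => grushinProfile γ e t s)
      (e * (γ + 1) ^ 2 * grushinProfile γ (e - 1) t s) s := by
  have hbase : HasDerivAt (fun s => t ^ (γ + 1) + (γ + 1) ^ 2 * s) ((γ + 1) ^ 2) s := by
    simpa using ((hasDerivAt_id s).const_mul ((γ + 1) ^ 2)).const_add (t ^ (γ + 1))
  refine (hbase.rpow_const (p := e) (Or.inl hρ)).congr_deriv ?_
  rw [grushinProfile]
  ring

lemma hasDerivAt_deriv_grushinProfile_snd (hρ : t ^ (γ + 1) + (γ + 1) ^ 2 * s ≠ 0) :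
    HasDerivAt (fun s => e * (γ + 1) ^ 2 * grushinProfile γ (e - 1) t s)
      (e * (γ + 1) ^ 2 * ((e - 1) * (γ + 1) ^ 2 * grushinProfile γ (e - 2) t s)) s := by
  have hprofile := hasDerivAt_grushinProfile_snd (e := e - 1) hρ
  rw [show e - 1 - 1 = e - 2 by ring] at hprofile
  exact hprofile.const_mul _

end Derivatives

lemma grushin_radial_laplacian_eq {γ T V : ℝ} (hγ : γ + 1 ≠ 0) (hT : 0 < T) (hV : 0 ≤ V)
    (q m l : ℝ) :
    let e := q / (2 * (γ + 1))
    (4 * (e * (γ + 1) * (γ * T ^ (γ - 1) * grushinProfile γ (e - 1) T V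
        + T ^ γ * ((e - 1) * (γ + 1) * (T ^ γ * grushinProfile γ (e - 2) T V)))) * T
      + 2 * m * (e * (γ + 1) * (T ^ γ * grushinProfile γ (e - 1) T V)))
    + T ^ γ * (4 * (e * (γ + 1) ^ 2 * ((e - 1) * (γ + 1) ^ 2 * grushinProfile γ (e - 2) T V)) * V
      + 2 * l * (e * (γ + 1) ^ 2 * grushinProfile γ (e - 1) T V))
    = q * (q - 2 + (m + (1 + γ) * l)) * grushinProfile γ ((q - 2 - 2 * γ) / (2 * (γ + 1))) T V
        * T ^ γ := by
  intro e
  have he : (q - 2 - 2 * γ) / (2 * (γ + 1)) = e - 1 := by simp only [e]; field_simp; ring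
  have hρ : 0 < T ^ (γ + 1) + (γ + 1) ^ 2 * V := by positivity
  have hpow : T ^ γ = T ^ (γ - 1) * T := by
    rw [← Real.rpow_add_one hT.ne', sub_add_cancel]
  have hpow' : T ^ (γ + 1) = T ^ γ * T := Real.rpow_add_one hT.ne' γ
  have hprofile := grushinProfile_add_one (e := e - 2) hρ
  rw [show e - 2 + 1 = e - 1 by ring, hpow'] at hprofile
  have hq : q = 2 * (γ + 1) * e := by simp only [e]; field_simp
  rw [he, hprofile, hq, hpow]
  ring

lemma lapE_grushinProfile_fst {m : ℕ} {γ e V : ℝ} {x : EuclideanSpace ℝ (Fin m)} (hx : x ≠ 0)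
    (hV : 0 ≤ V) :
    lapE (fun x' => grushinProfile γ e (‖x'‖ ^ 2) V) x
      = 4 * (e * (γ + 1) * (γ * (‖x‖ ^ 2) ^ (γ - 1) * grushinProfile γ (e - 1) (‖x‖ ^ 2) V
          + (‖x‖ ^ 2) ^ γ * ((e - 1) * (γ + 1) *
            ((‖x‖ ^ 2) ^ γ * grushinProfile γ (e - 2) (‖x‖ ^ 2) V)))) * ‖x‖ ^ 2
        + 2 * m * (e * (γ + 1) * ((‖x‖ ^ 2) ^ γ * grushinProfile γ (e - 1) (‖x‖ ^ 2) V)) := by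
  have hT : 0 < ‖x‖ ^ 2 := by positivity
  have hρ : (‖x‖ ^ 2) ^ (γ + 1) + (γ + 1) ^ 2 * V ≠ 0 := by positivity
  refine lapE_comp_norm_sq (φ := fun t => grushinProfile γ e t V) ?_
    (hasDerivAt_deriv_grushinProfile_fst hT.ne' hρ)
  filter_upwards [eventually_gt_nhds hT] with t ht
  exact hasDerivAt_grushinProfile_fst ht.ne' (by positivity)

lemma lapE_grushinProfile_snd {l : ℕ} {γ e T : ℝ} (hT : 0 < T) (y : EuclideanSpace ℝ (Fin l)) :
    lapE (fun y' => grushinProfile γ e T (‖y'‖ ^ 2)) y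
      = 4 * (e * (γ + 1) ^ 2 * ((e - 1) * (γ + 1) ^ 2 * grushinProfile γ (e - 2) T (‖y‖ ^ 2)))
          * ‖y‖ ^ 2
        + 2 * l * (e * (γ + 1) ^ 2 * grushinProfile γ (e - 1) T (‖y‖ ^ 2)) := by
  have hρ : T ^ (γ + 1) + (γ + 1) ^ 2 * ‖y‖ ^ 2 ≠ 0 := by positivity
  refine lapE_comp_norm_sq (φ := fun s => grushinProfile γ e T s) ?_
    (hasDerivAt_deriv_grushinProfile_snd hρ)
  have hcont : ContinuousAt (fun s => T ^ (γ + 1) + (γ + 1) ^ 2 * s) (‖y‖ ^ 2) := by fun_prop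
  filter_upwards [hcont.eventually_ne hρ] with s hs
  exact hasDerivAt_grushinProfile_snd hs

theorem grushin_gauge_power_general (m l : ℕ) (γ q : ℝ) (hγ : 0 ≤ γ)
    (x : EuclideanSpace ℝ (Fin m)) (y : EuclideanSpace ℝ (Fin l))
    (hx : x ≠ 0) :
    lapE (fun x' => ((‖x'‖ ^ (2 * (γ + 1)) + (γ + 1) ^ 2 * ‖y‖ ^ 2) ^ (1 / (2 * (γ + 1)))) ^ q) x
      + ‖x‖ ^ (2 * γ) *
        lapE (fun y' => ((‖x‖ ^ (2 * (γ + 1)) + (γ + 1) ^ 2 * ‖y'‖ ^ 2) ^ (1 / (2 * (γ + 1)))) ^ q) y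
    = q * (q - 2 + ((m : ℝ) + (1 + γ) * l)) *
        ((‖x‖ ^ (2 * (γ + 1)) + (γ + 1) ^ 2 * ‖y‖ ^ 2) ^ (1 / (2 * (γ + 1)))) ^ (q - 2 - 2 * γ) *
        ‖x‖ ^ (2 * γ) := by
  have hγ' : γ + 1 ≠ 0 := by positivity
  simp only [rpow_grushin_gauge_eq_grushinProfile hγ' _ (norm_nonneg _)]
  rw [lapE_grushinProfile_fst hx (sq_nonneg ‖y‖),
    lapE_grushinProfile_snd (pow_pos (norm_pos_iff.mpr hx) 2),
    Real.rpow_mul (norm_nonneg x), Real.rpow_two]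
  exact grushin_radial_laplacian_eq hγ' (by positivity) (sq_nonneg ‖y‖) q m l

/-- Radial powers of the Grushin gauge `d(x,y) = (|x|^{2(γ+1)} + (γ+1)²|y|²)^{1/(2(γ+1))}`
are eigenfunctions of the Grushin operator `Δ_γ = Δ_x + |x|^{2γ} Δ_y` away from `x = 0`:
`Δ_γ (d^q) = q (q - 2 + N_γ) d^{q-2-2γ} |x|^{2γ}`. -/
theorem grushin_gauge_power (m l : ℕ) (hm : 1 ≤ m) (hl : 1 ≤ l) (γ q : ℝ) (hγ : 0 ≤ γ)
    (x : EuclideanSpace ℝ (Fin m)) (y : EuclideanSpace ℝ (Fin l))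
    (hx : x ≠ 0) (hz : (x, y) ≠ 0) :
    lapE (fun x' => ((‖x'‖ ^ (2 * (γ + 1)) + (γ + 1) ^ 2 * ‖y‖ ^ 2) ^ (1 / (2 * (γ + 1)))) ^ q) x
      + ‖x‖ ^ (2 * γ) *
        lapE (fun y' => ((‖x‖ ^ (2 * (γ + 1)) + (γ + 1) ^ 2 * ‖y'‖ ^ 2) ^ (1 / (2 * (γ + 1)))) ^ q) y
    = q * (q - 2 + ((m : ℝ) + (1 + γ) * l)) *
        ((‖x‖ ^ (2 * (γ + 1)) + (γ + 1) ^ 2 * ‖y‖ ^ 2) ^ (1 / (2 * (γ + 1)))) ^ (q - 2 - 2 * γ) *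
        ‖x‖ ^ (2 * γ) :=
  grushin_gauge_power_general m l γ q hγ x y hx
end

section
/- The function Γ(z) = d(z)^{2−N_γ} is Grushin-harmonic away from the origin: for z = (x,y) with x ≠ 0 and z ≠ 0, one has Δ_γ Γ(z) = Δ_x Γ(z) + |x|^{2γ} Δ_y Γ(z) = 0, provided N_γ ≠ 2. -/
/-!
Both Laplacians act on radial functions, for which `Δ φ(|x|²) = 4|x|² φ''(|x|²) + 2n φ'(|x|²)`.
Put `p = γ + 1`, `S = |x|²`, `T = |y|²` and `A = S^p + p²T = d^{2p}`, so that
`Γ = A^β` with `β = (2 - N_γ) / (2p)`. The two radial formulas give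
`Δ_x Γ + S^γ Δ_y Γ = β p S^γ A^{β-1} (2m + 2pℓ - 4 + 4pβ)`,
and the last factor vanishes by the choice of `β`.
-/

open Filter Topology

section Radial

variable {n : ℕ} {φ φ' : ℝ → ℝ} {φ'' : ℝ} {x : EuclideanSpace ℝ (Fin n)}

theorem hasFDerivAt_comp_normSq {c : ℝ} (hφ : HasDerivAt φ c (‖x‖ ^ 2)) :
    HasFDerivAt (fun x' : EuclideanSpace ℝ (Fin n) => φ (‖x'‖ ^ 2)) (c • 2 • innerSL ℝ x) x :=
  hφ.comp_hasFDerivAt x (hasStrictFDerivAt_norm_sq x).hasFDerivAt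

theorem fderiv_comp_normSq_single (hφ : HasDerivAt φ (φ' (‖x‖ ^ 2)) (‖x‖ ^ 2)) (i : Fin n) :
    fderiv ℝ (fun x' : EuclideanSpace ℝ (Fin n) => φ (‖x'‖ ^ 2)) x (EuclideanSpace.single i 1)
      = φ' (‖x‖ ^ 2) * (2 * x i) := by
  simp [(hasFDerivAt_comp_normSq hφ).fderiv, EuclideanSpace.inner_single_right, mul_comm]

theorem fderiv_fderiv_comp_normSq_single (hφ : ∀ᶠ s in 𝓝 (‖x‖ ^ 2), HasDerivAt φ (φ' s) s)
    (hφ' : HasDerivAt φ' φ'' (‖x‖ ^ 2)) (i : Fin n) :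
    fderiv ℝ (fun z => fderiv ℝ (fun x' : EuclideanSpace ℝ (Fin n) => φ (‖x'‖ ^ 2)) z
        (EuclideanSpace.single i 1)) x (EuclideanSpace.single i 1)
      = 4 * x i ^ 2 * φ'' + 2 * φ' (‖x‖ ^ 2) := by
  have hnear : ∀ᶠ z in 𝓝 x, HasDerivAt φ (φ' (‖z‖ ^ 2)) (‖z‖ ^ 2) :=
    ((continuous_norm.pow 2).tendsto x).eventually hφ
  have hfirst : (fun z => fderiv ℝ (fun x' : EuclideanSpace ℝ (Fin n) => φ (‖x'‖ ^ 2)) z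
      (EuclideanSpace.single i 1)) =ᶠ[𝓝 x] fun z => φ' (‖z‖ ^ 2) * (2 * z i) :=
    hnear.mono fun z hz => fderiv_comp_normSq_single hz i
  have hcoord : HasFDerivAt (fun z : EuclideanSpace ℝ (Fin n) => 2 * z i)
      ((2 : ℝ) • EuclideanSpace.proj (𝕜 := ℝ) i) x :=
    (EuclideanSpace.proj (𝕜 := ℝ) i).hasFDerivAt.const_smul (2 : ℝ)
  have hprod : HasFDerivAt (fun z : EuclideanSpace ℝ (Fin n) => φ' (‖z‖ ^ 2) * (2 * z i)) _ x :=
    (hasFDerivAt_comp_normSq hφ').mul hcoord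
  rw [hfirst.fderiv_eq, hprod.fderiv]
  simp only [EuclideanSpace.proj, add_apply, smul_apply,
    PiLp.proj_apply, PiLp.single_eq_same, smul_eq_mul, mul_one, coe_innerSL_apply,
    EuclideanSpace.inner_single_right, Real.ringHom_apply, one_mul, nsmul_eq_mul, Nat.cast_ofNat]
  ring

theorem lapE_comp_normSq (hφ : ∀ᶠ s in 𝓝 (‖x‖ ^ 2), HasDerivAt φ (φ' s) s)
    (hφ' : HasDerivAt φ' φ'' (‖x‖ ^ 2)) :
    lapE (fun x' => φ (‖x'‖ ^ 2)) x = 4 * ‖x‖ ^ 2 * φ'' + 2 * n * φ' (‖x‖ ^ 2) := by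
  simp only [lapE, fderiv_fderiv_comp_normSq_single hφ hφ', Finset.sum_add_distrib,
    ← Finset.mul_sum, ← Finset.sum_mul, Finset.sum_const, Finset.card_univ, Fintype.card_fin,
    nsmul_eq_mul]
  simp only [EuclideanSpace.norm_sq_eq, Real.norm_eq_abs, sq_abs]
  ring

end Radial

theorem hasDerivAt_rpow_add_const_rpow {p C q s : ℝ} (hs : 0 < s) (hA : s ^ p + C ≠ 0) :
    HasDerivAt (fun s => (s ^ p + C) ^ q) (q * p * (s ^ (p - 1) * (s ^ p + C) ^ (q - 1))) s := by
  convert ((Real.hasDerivAt_rpow_const (p := p) (Or.inl hs.ne')).add_const C).rpow_const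
    (p := q) (Or.inl hA) using 1
  ring

theorem hasDerivAt_const_add_mul_rpow {B k q t : ℝ} (hD : B + k * t ≠ 0) :
    HasDerivAt (fun t => (B + k * t) ^ q) (q * k * (B + k * t) ^ (q - 1)) t := by
  convert (((hasDerivAt_id' t).const_mul k).const_add B).rpow_const (p := q) (Or.inl hD) using 1
  ring

section Profiles

variable {n : ℕ}

theorem lapE_normSq_rpow_add_const_rpow {p C β : ℝ} (hC : 0 ≤ C) {x : EuclideanSpace ℝ (Fin n)}
    (hx : x ≠ 0) :
    lapE (fun x' => ((‖x'‖ ^ 2) ^ p + C) ^ β) x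
      = β * p * (‖x‖ ^ 2) ^ (p - 1) * ((4 * (p - 1) + 2 * n) * ((‖x‖ ^ 2) ^ p + C) ^ (β - 1)
        + 4 * (β - 1) * p * (‖x‖ ^ 2) ^ p * ((‖x‖ ^ 2) ^ p + C) ^ (β - 2)) := by
  have hS : 0 < ‖x‖ ^ 2 := by positivity
  have hA : ∀ s : ℝ, 0 < s → s ^ p + C ≠ 0 := fun s hs => by positivity
  have hφ : ∀ᶠ s in 𝓝 (‖x‖ ^ 2), HasDerivAt (fun s => (s ^ p + C) ^ β)
      (β * p * (s ^ (p - 1) * (s ^ p + C) ^ (β - 1))) s :=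
    (eventually_gt_nhds hS).mono fun s hs => hasDerivAt_rpow_add_const_rpow hs (hA s hs)
  have hφ' := ((Real.hasDerivAt_rpow_const (p := p - 1) (Or.inl hS.ne')).mul
      (hasDerivAt_rpow_add_const_rpow (q := β - 1) hS (hA _ hS))).const_mul (β * p)
  rw [lapE_comp_normSq hφ hφ']
  generalize ‖x‖ ^ 2 = S at hS ⊢
  have e1 : S ^ (p - 1) = S ^ (p - 1 - 1) * S := by rw [← Real.rpow_add_one hS.ne']; ring_nf
  have e2 : S ^ p = S ^ (p - 1) * S := by rw [← Real.rpow_add_one hS.ne']; ring_nf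
  rw [show β - 1 - 1 = β - 2 by ring]
  linear_combination (-4 * β * p * (p - 1) * (S ^ p + C) ^ (β - 1)) * e1
    - (4 * β * p ^ 2 * (β - 1) * S ^ (p - 1) * (S ^ p + C) ^ (β - 2)) * e2

theorem lapE_const_add_mul_normSq_rpow {B k β : ℝ} {y : EuclideanSpace ℝ (Fin n)}
    (hD : B + k * ‖y‖ ^ 2 ≠ 0) :
    lapE (fun y' => (B + k * ‖y'‖ ^ 2) ^ β) y
      = β * k * (2 * n * (B + k * ‖y‖ ^ 2) ^ (β - 1)
        + 4 * (β - 1) * k * ‖y‖ ^ 2 * (B + k * ‖y‖ ^ 2) ^ (β - 2)) := by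
  have hψ : ∀ᶠ t in 𝓝 (‖y‖ ^ 2), HasDerivAt (fun t => (B + k * t) ^ β)
      (β * k * (B + k * t) ^ (β - 1)) t :=
    ((continuous_const.add (continuous_const.mul continuous_id)).continuousAt.eventually_ne
      hD).mono fun t ht => hasDerivAt_const_add_mul_rpow ht
  have hψ' := (hasDerivAt_const_add_mul_rpow (q := β - 1) hD).const_mul (β * k)
  rw [lapE_comp_normSq hψ hψ', show β - 1 - 1 = β - 2 by ring]
  ring

end Profiles

theorem grushin_radial_laplacians_cancel {m l γ β S T : ℝ}
    (hA : S ^ (γ + 1) + (γ + 1) ^ 2 * T ≠ 0) (hβ : 2 * (γ + 1) * β = 2 - (m + (1 + γ) * l)) :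
    β * (γ + 1) * S ^ γ * ((4 * γ + 2 * m) * (S ^ (γ + 1) + (γ + 1) ^ 2 * T) ^ (β - 1)
        + 4 * (β - 1) * (γ + 1) * S ^ (γ + 1) * (S ^ (γ + 1) + (γ + 1) ^ 2 * T) ^ (β - 2))
      + S ^ γ * (β * (γ + 1) ^ 2 * (2 * l * (S ^ (γ + 1) + (γ + 1) ^ 2 * T) ^ (β - 1)
        + 4 * (β - 1) * (γ + 1) ^ 2 * T * (S ^ (γ + 1) + (γ + 1) ^ 2 * T) ^ (β - 2)))
    = 0 := by
  have hpow : (S ^ (γ + 1) + (γ + 1) ^ 2 * T) ^ (β - 1)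
      = (S ^ (γ + 1) + (γ + 1) ^ 2 * T) ^ (β - 2) * (S ^ (γ + 1) + (γ + 1) ^ 2 * T) := by
    rw [← Real.rpow_add_one hA]; ring_nf
  linear_combination (2 * β * (γ + 1) * S ^ γ * (S ^ (γ + 1) + (γ + 1) ^ 2 * T) ^ (β - 1)) * hβ
    - (4 * (β - 1) * β * (γ + 1) ^ 2 * S ^ γ) * hpow

theorem rpow_two_mul_add_rpow_one_div_rpow {a c p e : ℝ} (ha : 0 ≤ a) (hc : 0 ≤ c)
    (hp : p ≠ 0) :
    ((a ^ (2 * p) + c) ^ (1 / (2 * p))) ^ e = ((a ^ 2) ^ p + c) ^ (e / (2 * p)) := by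
  rw [Real.rpow_mul ha, Real.rpow_two, ← Real.rpow_mul (by positivity)]
  congr 1
  field_simp

theorem grushin_fundamental_harmonic_general (m l : ℕ) (γ : ℝ) (hγ : 0 ≤ γ)
    (x : EuclideanSpace ℝ (Fin m)) (y : EuclideanSpace ℝ (Fin l))
    (hx : x ≠ 0) :
    lapE (fun x' => ((‖x'‖ ^ (2 * (γ + 1)) + (γ + 1) ^ 2 * ‖y‖ ^ 2) ^ (1 / (2 * (γ + 1))))
        ^ (2 - ((m : ℝ) + (1 + γ) * l))) x
      + ‖x‖ ^ (2 * γ) *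
        lapE (fun y' => ((‖x‖ ^ (2 * (γ + 1)) + (γ + 1) ^ 2 * ‖y'‖ ^ 2) ^ (1 / (2 * (γ + 1))))
          ^ (2 - ((m : ℝ) + (1 + γ) * l))) y
    = 0 := by
  simp (disch := positivity) only [rpow_two_mul_add_rpow_one_div_rpow]
  rw [lapE_normSq_rpow_add_const_rpow (by positivity) hx,
    lapE_const_add_mul_normSq_rpow (by positivity), Real.rpow_mul (norm_nonneg x), Real.rpow_two,
    add_sub_cancel_right]
  exact grushin_radial_laplacians_cancel (by positivity) (by field_simp)

/-- `Γ = d^{2-N_γ}` is Grushin-harmonic away from the origin (for `N_γ ≠ 2`), where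
`d(x,y) = (|x|^{2(γ+1)} + (γ+1)²|y|²)^{1/(2(γ+1))}` and `N_γ = m + (1+γ)ℓ`. -/
theorem grushin_fundamental_harmonic (m l : ℕ) (hm : 1 ≤ m) (hl : 1 ≤ l) (γ : ℝ) (hγ : 0 ≤ γ)
    (hN : (m : ℝ) + (1 + γ) * l ≠ 2)
    (x : EuclideanSpace ℝ (Fin m)) (y : EuclideanSpace ℝ (Fin l))
    (hx : x ≠ 0) (hz : (x, y) ≠ 0) :
    lapE (fun x' => ((‖x'‖ ^ (2 * (γ + 1)) + (γ + 1) ^ 2 * ‖y‖ ^ 2) ^ (1 / (2 * (γ + 1))))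
        ^ (2 - ((m : ℝ) + (1 + γ) * l))) x
      + ‖x‖ ^ (2 * γ) *
        lapE (fun y' => ((‖x‖ ^ (2 * (γ + 1)) + (γ + 1) ^ 2 * ‖y'‖ ^ 2) ^ (1 / (2 * (γ + 1))))
          ^ (2 - ((m : ℝ) + (1 + γ) * l))) y
    = 0 :=
  grushin_fundamental_harmonic_general m l γ hγ x y hx
end
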